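/- Let p be an odd rational prime. If p ≡ 1 or 7 (mod 8) then N(M_{p,α}) ≡ 4·w_p − 3 (mod p), and if p ≡ 3 or 5 (mod 8) then N(M_{p,α}) ≡ −4·w_p − 3 (mod p), where w_p is the coefficient of √2 in (1+√2)^p. -/

import Mathlib

/-- `α = 2 + √2` in `ℤ√2`. -/
def alphaZ : ℤ√2 := 2 + Zsqrtd.sqrtd

/-- The Mersenne number `M_{n,α} = (α^n - 1)/(α - 1) = (α^n - 1)·(√2 - 1)` in `ℤ√2`,
where `α = 2 + √2` (note `(α - 1)⁻¹ = (1 + √2)⁻¹ = √2 - 1`). -/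
def Mers (n : ℕ) : ℤ√2 := (alphaZ ^ n - 1) * (Zsqrtd.sqrtd - 1)

/-- `v n` is the rational part of `(1 + √2)^n`, i.e. `(1+√2)^n = v n + (w n)·√2`. -/
def vCoeff (n : ℕ) : ℤ := (((1 + Zsqrtd.sqrtd : ℤ√2)) ^ n).re

/-- `w n` is the coefficient of `√2` in `(1 + √2)^n`, i.e. `(1+√2)^n = v n + (w n)·√2`. -/
def wCoeff (n : ℕ) : ℤ := (((1 + Zsqrtd.sqrtd : ℤ√2)) ^ n).im

/-!
Since `N(√2 - 1) = -1` and `N(α) = 2`, we get `N(M_{n,α}) = -N(α^n - 1) = 2·Re(α^n) - 2^n - 1`.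
For odd `n = 2s + 1`, writing `α = √2·(1 + √2)` gives `α^n = 2^s·√2·(1 + √2)^n`, whose rational
part is `2^(s+1)·w_n`. Modulo a prime `p = 2s + 1`, Euler's criterion and the second supplement
give `2^s ≡ (2/p) = χ₈(p)`, which is `±1` according to `p mod 8`, and Fermat gives `(2^s)² ≡ 1`.
-/

open Zsqrtd

namespace Zsqrtd

variable {d : ℤ}

theorem norm_sub_one (z : ℤ√d) : (z - 1).norm = z.norm - 2 * z.re + 1 := by
  simp only [norm_def, re_sub, im_sub, re_one, im_one]
  ring

theorem sqrtd_pow_two_mul_add_one (s : ℕ) :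
    (sqrtd : ℤ√d) ^ (2 * s + 1) = ((d ^ s : ℤ) : ℤ√d) * sqrtd := by
  rw [pow_succ, pow_mul, sq, dmuld, Int.cast_pow]

theorem norm_pow (z : ℤ√d) (n : ℕ) : (z ^ n).norm = z.norm ^ n :=
  map_pow normMonoidHom z n

theorem re_sqrtd_mul (z : ℤ√d) : (sqrtd * z).re = d * z.im := by
  simp

end Zsqrtd

theorem alphaZ_eq_sqrtd_mul : alphaZ = sqrtd * (1 + sqrtd) := by
  rw [mul_add, mul_one, dmuld]
  rfl

theorem norm_alphaZ : alphaZ.norm = 2 := by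
  simp [alphaZ, norm_def]

theorem norm_Mers (n : ℕ) : (Mers n).norm = 2 * (alphaZ ^ n).re - 2 ^ n - 1 := by
  have h : (sqrtd - 1 : ℤ√2).norm = -1 := by simp [norm_def]
  rw [Mers, norm_mul, h, norm_sub_one, norm_pow, norm_alphaZ]
  ring

theorem re_alphaZ_pow_two_mul_add_one (s : ℕ) :
    (alphaZ ^ (2 * s + 1)).re = 2 ^ (s + 1) * wCoeff (2 * s + 1) := by
  rw [alphaZ_eq_sqrtd_mul, mul_pow, sqrtd_pow_two_mul_add_one, mul_assoc, wCoeff,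
    re_mul, re_intCast, im_intCast, re_sqrtd_mul]
  ring

theorem norm_Mers_two_mul_add_one (s : ℕ) :
    (Mers (2 * s + 1)).norm = 4 * 2 ^ s * wCoeff (2 * s + 1) - 2 * (2 ^ s) ^ 2 - 1 := by
  rw [norm_Mers, re_alphaZ_pow_two_mul_add_one]
  ring

theorem two_pow_div_two_modEq_χ₈ (p : ℕ) [Fact p.Prime] (hp : p ≠ 2) :
    2 ^ (p / 2) ≡ ZMod.χ₈ p [ZMOD p] := by
  rw [← ZMod.intCast_eq_intCast_iff, ← legendreSym.at_two hp, legendreSym.eq_pow]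
  push_cast
  rfl

theorem norm_Mers_modEq_χ₈ (p : ℕ) [Fact p.Prime] (hp : p ≠ 2) :
    (Mers p).norm ≡ 4 * ZMod.χ₈ p * wCoeff p - 3 [ZMOD p] := by
  obtain ⟨s, rfl⟩ := (Fact.out : p.Prime).odd_of_ne_two hp
  have hs : (2 * s + 1) / 2 = s := by omega
  have hχ := two_pow_div_two_modEq_χ₈ (2 * s + 1) hp
  rw [hs] at hχ
  have hcoprime : IsCoprime (2 : ℤ) (2 * s + 1 : ℕ) := ⟨-s, 1, by push_cast; ring⟩
  have hfermat : ((2 : ℤ) ^ s) ^ 2 ≡ 1 [ZMOD (2 * s + 1 : ℕ)] := by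
    simpa [pow_mul'] using Int.ModEq.pow_card_sub_one_eq_one Fact.out hcoprime
  calc (Mers (2 * s + 1)).norm
      = 4 * 2 ^ s * wCoeff (2 * s + 1) - 2 * (2 ^ s) ^ 2 - 1 := norm_Mers_two_mul_add_one s
    _ ≡ 4 * ZMod.χ₈ (2 * s + 1 : ℕ) * wCoeff (2 * s + 1) - 2 * 1 - 1 [ZMOD (2 * s + 1 : ℕ)] := by
        gcongr
    _ = _ := by ring

/-- **(Property 4, §1).** For an odd prime `p`: if `p ≡ ±1 (mod 8)` then
`N(M_{p,α}) ≡ 4w_p - 3 (mod p)`, and if `p ≡ ±3 (mod 8)` then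
`N(M_{p,α}) ≡ -4w_p - 3 (mod p)`. -/
theorem norm_mersenne_mod_p (p : ℕ) (hp : Nat.Prime p) (hodd : Odd p) :
    (p % 8 = 1 ∨ p % 8 = 7 →
      Zsqrtd.norm (Mers p) ≡ 4 * wCoeff p - 3 [ZMOD (p : ℤ)]) ∧
    (p % 8 = 3 ∨ p % 8 = 5 →
      Zsqrtd.norm (Mers p) ≡ -4 * wCoeff p - 3 [ZMOD (p : ℤ)]) := by
  have : Fact p.Prime := ⟨hp⟩
  have hp2 : p ≠ 2 := by
    rintro rfl
    exact absurd hodd (by decide)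
  have h := norm_Mers_modEq_χ₈ p hp2
  rw [ZMod.χ₈_nat_eq_if_mod_eight, if_neg (Nat.odd_iff.mp hodd ▸ one_ne_zero)] at h
  constructor
  · intro h17
    rwa [if_pos h17, mul_one] at h
  · intro h35
    rwa [if_neg (by omega), mul_neg_one] at h
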